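/- (Fidelity preservation) Define the measurement fidelity f(M) := (1/2^n) Σ_x ⟨x|Π_x|x⟩ for a measurement channel M with POVM {Π_x}. Then the IZ-dephased, XY-twirled, and Pauli-twirled measurement channels all have the same fidelity as M: f(M) = f(M^{IZ}) = f(M^{XY}) = f(M^{Pauli}). -/

import Mathlib

open ComplexOrder Matrix Finset

/-- Single-qubit Pauli matrix `i^{ax·az} X^{ax} Z^{az}`:
`(false,false) = I`, `(true,false) = X`, `(false,true) = Z`, `(true,true) = Y`. -/
noncomputable def pauli1 (ax az : Bool) : Matrix Bool Bool ℂ := fun x y =>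
  match ax, az with
  | false, false => if x = y then 1 else 0
  | true,  false => if x = y then 0 else 1
  | false, true  => if x = y then (if x then -1 else 1) else 0
  | true,  true  => if x = false ∧ y = true then -Complex.I
                    else if x = true ∧ y = false then Complex.I else 0

/-- The `n`-qubit Pauli word with X-part `a` and Z-part `b`. -/
noncomputable def pauliW {n : ℕ} (a b : Fin n → Bool) :
    Matrix (Fin n → Bool) (Fin n → Bool) ℂ :=
  fun x y => ∏ i, pauli1 (a i) (b i) (x i) (y i)

/-- The measurement channel of a POVM `{Pm x}`. -/
noncomputable def mchan {n : ℕ}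
    (Pm : (Fin n → Bool) → Matrix (Fin n → Bool) (Fin n → Bool) ℂ)
    (ρ : Matrix (Fin n → Bool) (Fin n → Bool) ℂ) :
    Matrix (Fin n → Bool) (Fin n → Bool) ℂ :=
  ∑ x, (Pm x * ρ).trace • Matrix.single x x (1 : ℂ)

/-- Measurement fidelity `f = (1/2^n) Σ_x ⟨x|Pm_x|x⟩` of a POVM. -/
noncomputable def mfid {n : ℕ}
    (Pm : (Fin n → Bool) → Matrix (Fin n → Bool) (Fin n → Bool) ℂ) : ℂ :=
  ((1 : ℂ) / 2 ^ n) * ∑ x, Pm x x x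

/-!
Conjugating a basis projector `|x⟩⟨x|` by the Pauli word with X-part `a` gives `|a + x⟩⟨a + x|`
(bitwise xor), so conjugating a measurement channel by it merely relabels the outcomes by `a`.
Hence `⟨x|Π'_x|x⟩` for a twirled POVM `Π'` is an average of the diagonal entries
`⟨a + x|Π_{a + x}|a + x⟩`, and summing over `x` absorbs the shift `x ↦ a + x`.
-/

section

variable {n : ℕ}

local notation "𝕄" n => Matrix (Fin n → Bool) (Fin n → Bool) ℂ

lemma sum_const_bitstrings {R : Type*} [Semiring R] (c : R) :
    ∑ _ : Fin n → Bool, c = 2 ^ n * c := by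
  simp

-- `-a = a` in `ι → Bool`, since negation on `Bool` is the identity.
lemma bool_add_add_cancel_left {ι : Type*} (a y : ι → Bool) : a + (a + y) = y :=
  neg_add_cancel_left a y

-- The phases cancel: for `Y` the two entries on the flip are `-i` and `i`.
lemma pauli1_mul_pauli1 (ax az u x v : Bool) :
    pauli1 ax az u x * pauli1 ax az x v = if u = ax + x ∧ v = ax + x then 1 else 0 := by
  rcases ax <;> rcases az <;> rcases u <;> rcases x <;> rcases v <;>
    simp [pauli1, Complex.I_mul_I, Bool.zero_eq_false]

lemma pauliW_mul_single_mul_pauliW (a b x : Fin n → Bool) :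
    pauliW a b * single x x 1 * pauliW a b = single (a + x) (a + x) 1 := by
  ext u v
  have hentry : (pauliW a b * single x x (1 : ℂ) * pauliW a b) u v
      = pauliW a b u x * pauliW a b x v := by
    simp [mul_apply, single, ite_and, Finset.sum_ite_eq]
  rw [hentry, pauliW, pauliW, ← Finset.prod_mul_distrib]
  simp only [pauli1_mul_pauli1, Finset.prod_boole, single_apply]
  simp [funext_iff, eq_comm, forall_and]

lemma mchan_apply_self (Pm : (Fin n → Bool) → 𝕄 n) (ρ : 𝕄 n) (x : Fin n → Bool) :
    mchan Pm ρ x x = (Pm x * ρ).trace := by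
  simp [mchan, Matrix.sum_apply, single_apply]

lemma mchan_single_apply_self (Pm : (Fin n → Bool) → 𝕄 n) (x y : Fin n → Bool) :
    mchan Pm (single y y 1) x x = Pm x y y := by
  simp [mchan_apply_self, trace_mul_single]

lemma pauliW_mul_mchan_mul_pauliW (a b : Fin n → Bool) (Pm : (Fin n → Bool) → 𝕄 n) (ρ : 𝕄 n) :
    pauliW a b * mchan Pm ρ * pauliW a b = mchan (fun y => Pm (a + y)) ρ := by
  simp only [mchan, Finset.mul_sum, Finset.sum_mul, Matrix.mul_smul, Matrix.smul_mul,
    pauliW_mul_single_mul_pauliW]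
  exact Fintype.sum_equiv (Equiv.addLeft a) _ _ fun y => by
    simp only [Equiv.coe_addLeft, bool_add_add_cancel_left]

-- The channels `M^{IZ}`, `M^{XY}`, `M^{Pauli}`: `pauliW 0 s` runs over `{I,Z}^⊗n` and
-- `pauliW 1 s` over `{X,Y}^⊗n`.
noncomputable def dephaseIZ (M : (𝕄 n) → 𝕄 n) (ρ : 𝕄 n) : 𝕄 n :=
  ((1 : ℂ) / 2 ^ n) • ∑ s, M (pauliW 0 s * ρ * pauliW 0 s)

noncomputable def twirlXY (M : (𝕄 n) → 𝕄 n) (ρ : 𝕄 n) : 𝕄 n :=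
  ((1 : ℂ) / 2 ^ n) • ∑ s, pauliW 1 s * M (pauliW 1 s * ρ * pauliW 1 s) * pauliW 1 s

noncomputable def pauliTwirl (M : (𝕄 n) → 𝕄 n) (ρ : 𝕄 n) : 𝕄 n :=
  ((1 : ℂ) / 4 ^ n) • ∑ a, ∑ b, pauliW a b * M (pauliW a b * ρ * pauliW a b) * pauliW a b

variable (Pm : (Fin n → Bool) → 𝕄 n) (x : Fin n → Bool)

lemma dephaseIZ_mchan_single_apply_self :
    dephaseIZ (mchan Pm) (single x x 1) x x = Pm x x x := by
  rw [dephaseIZ, Matrix.smul_apply, Matrix.sum_apply]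
  simp only [pauliW_mul_single_mul_pauliW, zero_add, mchan_single_apply_self,
    sum_const_bitstrings, smul_eq_mul]
  field_simp

lemma twirlXY_mchan_single_apply_self :
    twirlXY (mchan Pm) (single x x 1) x x = Pm (1 + x) (1 + x) (1 + x) := by
  rw [twirlXY, Matrix.smul_apply, Matrix.sum_apply]
  simp only [pauliW_mul_single_mul_pauliW, pauliW_mul_mchan_mul_pauliW, mchan_single_apply_self,
    sum_const_bitstrings, smul_eq_mul]
  field_simp

lemma pauliTwirl_mchan_single_apply_self :
    pauliTwirl (mchan Pm) (single x x 1) x x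
      = (1 / 2 ^ n) * ∑ a, Pm (a + x) (a + x) (a + x) := by
  rw [pauliTwirl, Matrix.smul_apply, Matrix.sum_apply]
  simp only [Matrix.sum_apply, pauliW_mul_single_mul_pauliW, pauliW_mul_mchan_mul_pauliW,
    mchan_single_apply_self, sum_const_bitstrings, smul_eq_mul, ← mul_sum]
  rw [show (4 : ℂ) ^ n = 2 ^ n * 2 ^ n by rw [← mul_pow]; norm_num]
  field_simp

variable {Pm} {Q : (Fin n → Bool) → 𝕄 n}

lemma mfid_eq_of_mchan_eq {M : (𝕄 n) → 𝕄 n} (h : ∀ ρ, mchan Q ρ = M ρ) :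
    mfid Q = (1 / 2 ^ n) * ∑ x, M (single x x 1) x x := by
  simp only [mfid, ← h, mchan_single_apply_self]

lemma sum_diag_add_left (a : Fin n → Bool) :
    ∑ x, Pm (a + x) (a + x) (a + x) = ∑ x, Pm x x x :=
  Fintype.sum_equiv (Equiv.addLeft a) _ _ fun _ => rfl

lemma mfid_eq_of_mchan_eq_dephaseIZ (h : ∀ ρ, mchan Q ρ = dephaseIZ (mchan Pm) ρ) :
    mfid Q = mfid Pm := by
  rw [mfid_eq_of_mchan_eq h, mfid]
  simp only [dephaseIZ_mchan_single_apply_self]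

lemma mfid_eq_of_mchan_eq_twirlXY (h : ∀ ρ, mchan Q ρ = twirlXY (mchan Pm) ρ) :
    mfid Q = mfid Pm := by
  rw [mfid_eq_of_mchan_eq h, mfid]
  simp only [twirlXY_mchan_single_apply_self, sum_diag_add_left]

lemma mfid_eq_of_mchan_eq_pauliTwirl (h : ∀ ρ, mchan Q ρ = pauliTwirl (mchan Pm) ρ) :
    mfid Q = mfid Pm := by
  rw [mfid_eq_of_mchan_eq h, mfid]
  simp only [pauliTwirl_mchan_single_apply_self, ← mul_sum]
  rw [sum_comm, sum_congr rfl fun a _ => sum_diag_add_left a, sum_const_bitstrings]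
  field_simp

end

theorem fidelity_preserving_general {n : ℕ}
    (Pm PmIZ PmXY PmP : (Fin n → Bool) → Matrix (Fin n → Bool) (Fin n → Bool) ℂ)
    (hIZ : ∀ ρ, mchan PmIZ ρ
        = ((1 : ℂ) / 2 ^ n) •
            ∑ s, mchan Pm (pauliW (fun _ => false) s * ρ * pauliW (fun _ => false) s))
    (hXY : ∀ ρ, mchan PmXY ρ
        = ((1 : ℂ) / 2 ^ n) •
            ∑ s, pauliW (fun _ => true) s *
              mchan Pm (pauliW (fun _ => true) s * ρ * pauliW (fun _ => true) s) *
              pauliW (fun _ => true) s)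
    (hP : ∀ ρ, mchan PmP ρ
        = ((1 : ℂ) / 4 ^ n) •
            ∑ a, ∑ b, pauliW a b * mchan Pm (pauliW a b * ρ * pauliW a b) * pauliW a b) :
    mfid Pm = mfid PmIZ ∧ mfid Pm = mfid PmXY ∧ mfid Pm = mfid PmP :=
  ⟨(mfid_eq_of_mchan_eq_dephaseIZ hIZ).symm, (mfid_eq_of_mchan_eq_twirlXY hXY).symm,
    (mfid_eq_of_mchan_eq_pauliTwirl hP).symm⟩

/-- Fidelity preservation: if `PmIZ`, `PmXY`, `PmP` are the POVMs of the IZ-dephased,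
XY-twirled, and Pauli-twirled measurement channels of a measurement channel `M` with
POVM `{Pm x}`, then all four measurements have the same measurement fidelity.
(`{I,Z}^⊗n` words are `pauliW 0 s`, `{X,Y}^⊗n` words are `pauliW 1 s`.) -/
theorem fidelity_preserving {n : ℕ}
    (Pm PmIZ PmXY PmP : (Fin n → Bool) → Matrix (Fin n → Bool) (Fin n → Bool) ℂ)
    (hpos : ∀ x, (Pm x).PosSemidef) (hsum : ∑ x, Pm x = 1)
    (hIZ : ∀ ρ, mchan PmIZ ρ
        = ((1 : ℂ) / 2 ^ n) •
            ∑ s, mchan Pm (pauliW (fun _ => false) s * ρ * pauliW (fun _ => false) s))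
    (hXY : ∀ ρ, mchan PmXY ρ
        = ((1 : ℂ) / 2 ^ n) •
            ∑ s, pauliW (fun _ => true) s *
              mchan Pm (pauliW (fun _ => true) s * ρ * pauliW (fun _ => true) s) *
              pauliW (fun _ => true) s)
    (hP : ∀ ρ, mchan PmP ρ
        = ((1 : ℂ) / 4 ^ n) •
            ∑ a, ∑ b, pauliW a b * mchan Pm (pauliW a b * ρ * pauliW a b) * pauliW a b) :
    mfid Pm = mfid PmIZ ∧ mfid Pm = mfid PmXY ∧ mfid Pm = mfid PmP :=
  fidelity_preserving_general Pm PmIZ PmXY PmP hIZ hXY hP
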